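/- Let f : Finset α → ℝ be monotone, normalized and submodular, M a matroid on α of rank k ≥ 1, ε > 0, and π a finite stream of distinct elements. Let OPT be an independent subset of the streamed elements maximizing f. If the threshold satisfies 0 ≤ τ ≤ f(OPT), then the output S of Threshold-Swapping with precision ε and threshold τ satisfies f(OPT) ≤ 4·f(S) + ε·f(OPT); i.e., Threshold-Swapping is a (4 + O(ε))-approximation to the optimal offline solution on the stream. -/

import Mathlib

open Finset

attribute [local instance] Classical.propDecidable

universe u

/-- A matroid on a ground set `α`, given as a nonempty, downward closed family of
finite independent sets satisfying the augmentation property. -/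
structure MatroidOn (α : Type u) where
  Indep : Finset α → Prop
  nonempty : ∃ A, Indep A
  subset_indep : ∀ ⦃A B : Finset α⦄, A ⊆ B → Indep B → Indep A
  augment : ∀ ⦃A B : Finset α⦄, Indep A → Indep B → A.card < B.card →
    ∃ e ∈ B, e ∉ A ∧ Indep (insert e A)

/-- Submodularity of a set function. -/
def SubmodularFn {α : Type u} [DecidableEq α] (f : Finset α → ℝ) : Prop :=
  ∀ X Y : Finset α, X ⊆ Y → ∀ e, e ∉ Y →
    f (insert e Y) - f Y ≤ f (insert e X) - f X

/-- Monotonicity of a set function. -/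
def MonotoneFn {α : Type u} (f : Finset α → ℝ) : Prop :=
  ∀ X Y : Finset α, X ⊆ Y → f X ≤ f Y

variable {α : Type u} [DecidableEq α]

/-- The marginal gain `f(e | T) = f (T ∪ {e}) - f T`. -/
def marg (f : Finset α → ℝ) (T : Finset α) (e : α) : ℝ := f (insert e T) - f T

/-- State of the `Threshold-Swapping` algorithm: the current solution `S`, the set `S'`
of all elements ever added to the solution, the set `F` of elements that failed the
threshold test, and the weights `w` assigned so far. -/
structure TSState (α : Type u) where
  S : Finset α
  S' : Finset α
  F : Finset α
  w : α → ℝ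

/-- Initial state of the `Threshold-Swapping` algorithm. -/
def TSState.start (α : Type u) : TSState α := ⟨∅, ∅, ∅, fun _ => 0⟩

/-- One step of the `Threshold-Swapping` algorithm with precision `ε`, threshold `τ`, and
rank `k`, processing the arriving element `e`.  An arriving element `e` with weight
`w e = f(e | S') < (ε/k)·τ` is ignored (and recorded in `F`); otherwise the step coincides
with a step of the `Swapping` algorithm.  Ties in the choice of the minimum-weight swap
candidate may be broken arbitrarily. -/
inductive TSStep (f : Finset α → ℝ) (M : MatroidOn α) (ε τ : ℝ) (k : ℕ) :
    TSState α → α → TSState α → Prop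
  | ignore {st : TSState α} {e : α} (hfail : marg f st.S' e < ε / (k : ℝ) * τ) :
      TSStep f M ε τ k st e
        ⟨st.S, st.S', insert e st.F, Function.update st.w e (marg f st.S' e)⟩
  | add {st : TSState α} {e : α} (hpass : ¬ marg f st.S' e < ε / (k : ℝ) * τ)
      (hind : M.Indep (insert e st.S)) :
      TSStep f M ε τ k st e
        ⟨insert e st.S, insert e st.S', st.F, Function.update st.w e (marg f st.S' e)⟩
  | swap {st : TSState α} {e y : α} (hpass : ¬ marg f st.S' e < ε / (k : ℝ) * τ)
      (hdep : ¬ M.Indep (insert e st.S))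
      (hy : y ∈ st.S) (hyind : M.Indep (insert e (st.S.erase y)))
      (hmin : ∀ z ∈ st.S, M.Indep (insert e (st.S.erase z)) → st.w y ≤ st.w z)
      (hgain : 2 * st.w y < marg f st.S' e) :
      TSStep f M ε τ k st e
        ⟨insert e (st.S.erase y), insert e st.S', st.F,
          Function.update st.w e (marg f st.S' e)⟩
  | discardLow {st : TSState α} {e y : α} (hpass : ¬ marg f st.S' e < ε / (k : ℝ) * τ)
      (hdep : ¬ M.Indep (insert e st.S))
      (hy : y ∈ st.S) (hyind : M.Indep (insert e (st.S.erase y)))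
      (hmin : ∀ z ∈ st.S, M.Indep (insert e (st.S.erase z)) → st.w y ≤ st.w z)
      (hgain : ¬ 2 * st.w y < marg f st.S' e) :
      TSStep f M ε τ k st e ⟨st.S, st.S', st.F, Function.update st.w e (marg f st.S' e)⟩
  | discardNone {st : TSState α} {e : α} (hpass : ¬ marg f st.S' e < ε / (k : ℝ) * τ)
      (hdep : ¬ M.Indep (insert e st.S))
      (h : ∀ y ∈ st.S, ¬ M.Indep (insert e (st.S.erase y))) :
      TSStep f M ε τ k st e ⟨st.S, st.S', st.F, Function.update st.w e (marg f st.S' e)⟩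

/-- Run of the `Threshold-Swapping` algorithm from a given state. -/
inductive TSRunFrom (f : Finset α → ℝ) (M : MatroidOn α) (ε τ : ℝ) (k : ℕ) :
    TSState α → List α → TSState α → Prop
  | nil (st : TSState α) : TSRunFrom f M ε τ k st [] st
  | cons {st st₁ st₂ : TSState α} {e : α} {π : List α}
      (hstep : TSStep f M ε τ k st e st₁) (hrest : TSRunFrom f M ε τ k st₁ π st₂) :
      TSRunFrom f M ε τ k st (e :: π) st₂

/-- `TSRun f M ε τ k π st` holds iff some run of `Threshold-Swapping` on the stream `π`
terminates in state `st`. -/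
def TSRun (f : Finset α → ℝ) (M : MatroidOn α) (ε τ : ℝ) (k : ℕ)
    (π : List α) (st : TSState α) : Prop :=
  TSRunFrom f M ε τ k (TSState.start α) π st

/-- `M` has rank `k`: some independent set has cardinality `k` and every independent set
has cardinality at most `k`. -/
def MatroidOn.HasRank (M : MatroidOn α) (k : ℕ) : Prop :=
  (∃ Bas : Finset α, M.Indep Bas ∧ Bas.card = k) ∧ ∀ A : Finset α, M.Indep A → A.card ≤ k

section Aux

set_option linter.unusedSectionVars false


lemma insert_classical_eq (a : α) (s : Finset α) :
    (@insert α (Finset α) (@Finset.instInsert α (fun a b => Classical.propDecidable (a = b))) a s)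
      = insert a s := by
  ext x
  simp [Finset.mem_insert]

/-- The augmentation axiom, restated with the ambient `DecidableEq` instance. -/
lemma MatroidOn.augment' (M : MatroidOn α) {A B : Finset α} (hA : M.Indep A)
    (hB : M.Indep B) (h : A.card < B.card) :
    ∃ e ∈ B, e ∉ A ∧ M.Indep (insert e A) := by
  obtain ⟨e, he, heA, hind⟩ := M.augment hA hB h
  exact ⟨e, he, heA, by rwa [insert_classical_eq] at hind⟩

lemma MatroidOn.indep_empty (M : MatroidOn α) : M.Indep ∅ := by
  obtain ⟨A, hA⟩ := M.nonempty
  exact M.subset_indep (Finset.empty_subset A) hA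

lemma MatroidOn.dep_mono (M : MatroidOn α) {A B : Finset α} (h : A ⊆ B)
    (hA : ¬ M.Indep A) : ¬ M.Indep B := fun hB => hA (M.subset_indep h hB)

/-- Repeated augmentation: an independent set can be grown inside `I ∪ B` to size `≥ |B|`. -/
lemma MatroidOn.exists_indep_card (M : MatroidOn α) :
    ∀ (n : ℕ) (I B : Finset α), M.Indep I → M.Indep B → B.card ≤ I.card + n →
    ∃ J, M.Indep J ∧ I ⊆ J ∧ J ⊆ I ∪ B ∧ B.card ≤ J.card := by
  intro n
  induction n with
  | zero =>
    intro I B hI _ h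
    exact ⟨I, hI, subset_rfl, Finset.subset_union_left, by omega⟩
  | succ n ih =>
    intro I B hI hB h
    by_cases hc : B.card ≤ I.card
    · exact ⟨I, hI, subset_rfl, Finset.subset_union_left, hc⟩
    · obtain ⟨x, hxB, hxI, hind⟩ := M.augment' hI hB (by omega)
      obtain ⟨J, hJ, hIJ, hJU, hcard⟩ := ih (insert x I) B hind hB
        (by rw [Finset.card_insert_of_notMem hxI]; omega)
      refine ⟨J, hJ, (Finset.subset_insert x I).trans hIJ, hJU.trans ?_, hcard⟩
      exact Finset.union_subset
        (Finset.insert_subset (Finset.mem_union_right _ hxB) Finset.subset_union_left)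
        Finset.subset_union_right

/-- Any independent subset of `U` extends to a maximal independent subset of `U`. -/
lemma MatroidOn.exists_maximal (M : MatroidOn α) :
    ∀ (n : ℕ) (I U : Finset α), M.Indep I → I ⊆ U → U.card ≤ I.card + n →
    ∃ D, M.Indep D ∧ I ⊆ D ∧ D ⊆ U ∧ ∀ x ∈ U, x ∉ D → ¬ M.Indep (insert x D) := by
  intro n
  induction n with
  | zero =>
    intro I U hI hIU h
    have : I = U := Finset.eq_of_subset_of_card_le hIU h
    subst this
    exact ⟨I, hI, subset_rfl, subset_rfl, fun x hx hx' => absurd hx hx'⟩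
  | succ n ih =>
    intro I U hI hIU h
    by_cases hc : ∃ x ∈ U, x ∉ I ∧ M.Indep (insert x I)
    · obtain ⟨x, hxU, hxI, hind⟩ := hc
      obtain ⟨D, h1, h2, h3, h4⟩ := ih (insert x I) U hind
        (Finset.insert_subset hxU hIU)
        (by rw [Finset.card_insert_of_notMem hxI]; omega)
      exact ⟨D, h1, (Finset.subset_insert x I).trans h2, h3, h4⟩
    · push_neg at hc
      exact ⟨I, hI, subset_rfl, hIU, hc⟩

/-- If every element of an independent set `I` is spanned by an independent set `T`,
then `|I| ≤ |T|`. -/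
lemma MatroidOn.span_card (M : MatroidOn α) {T I : Finset α} (hT : M.Indep T)
    (hI : M.Indep I) (h : ∀ x ∈ I, x ∈ T ∨ ¬ M.Indep (insert x T)) :
    I.card ≤ T.card := by
  by_contra hc
  obtain ⟨x, hxI, hxT, hind⟩ := M.augment' hT hI (by omega)
  rcases h x hxI with h1 | h2
  · exact hxT h1
  · exact h2 hind

/-- If `S` is independent but `S + e` is dependent, then `e` is spanned by the set of
elements of `S` that can be swapped out for `e`. -/
lemma MatroidOn.swap_filter_dep (M : MatroidOn α) {S : Finset α} {e : α}
    (hS : M.Indep S) (hdep : ¬ M.Indep (insert e S)) :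
    ¬ M.Indep (insert e (S.filter fun y => M.Indep (insert e (S.erase y)))) := by
  intro hind
  have heS : e ∉ S := fun h => hdep (by rwa [Finset.insert_eq_self.mpr h])
  set H := S.filter fun y => M.Indep (insert e (S.erase y)) with hH
  have hHS : H ⊆ S := Finset.filter_subset _ _
  obtain ⟨J, hJ, hIJ, hJU, hcard⟩ := M.exists_indep_card S.card (insert e H) S hind hS
    (Nat.le_add_left _ _)
  have hJsub : J ⊆ insert e S := hJU.trans (Finset.union_subset
    (Finset.insert_subset_insert _ hHS) (Finset.subset_insert _ _))
  have heJ : e ∈ J := hIJ (Finset.mem_insert_self _ _)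
  have hJne : J ≠ insert e S := fun h => hdep (h ▸ hJ)
  have hcins : (insert e S).card = S.card + 1 := Finset.card_insert_of_notMem heS
  have hJcard : J.card = S.card := by
    rcases eq_or_lt_of_le (Finset.card_le_card hJsub) with h1 | h1
    · exact absurd (Finset.eq_of_subset_of_card_le hJsub (le_of_eq h1.symm)) hJne
    · omega
  -- S \ J is a singleton
  have hSJ : S ∩ J = J.erase e := by
    ext a
    simp only [Finset.mem_inter, Finset.mem_erase]
    constructor
    · rintro ⟨haS, haJ⟩; exact ⟨fun h => heS (h ▸ haS), haJ⟩
    · rintro ⟨hae, haJ⟩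
      refine ⟨?_, haJ⟩
      rcases Finset.mem_insert.mp (hJsub haJ) with h | h
      · exact absurd h hae
      · exact h
  have hk1 : 1 ≤ S.card := by
    rcases Finset.eq_empty_or_nonempty S with h | h
    · subst h
      exact absurd (M.subset_indep
        (Finset.insert_subset_insert _ (Finset.empty_subset _)) hind) hdep
    · exact Finset.card_pos.mpr h
  have hcard1 : (S \ J).card = 1 := by
    have h1 : (S \ J).card + (S ∩ J).card = S.card := Finset.card_sdiff_add_card_inter S J
    have h2 : (J.erase e).card = S.card - 1 := by
      rw [Finset.card_erase_of_mem heJ, hJcard]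
    rw [hSJ] at h1; omega
  obtain ⟨y, hy⟩ := Finset.card_eq_one.mp hcard1
  have hyS : y ∈ S := by
    have : y ∈ S \ J := hy ▸ Finset.mem_singleton_self y
    exact (Finset.mem_sdiff.mp this).1
  have hyJ : y ∉ J := by
    have : y ∈ S \ J := hy ▸ Finset.mem_singleton_self y
    exact (Finset.mem_sdiff.mp this).2
  -- J = insert e (S.erase y)
  have hJeq : J = insert e (S.erase y) := by
    apply Finset.eq_of_subset_of_card_le
    · intro a haJ
      rcases Finset.mem_insert.mp (hJsub haJ) with h | h
      · exact Finset.mem_insert.mpr (Or.inl h)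
      · refine Finset.mem_insert.mpr (Or.inr (Finset.mem_erase.mpr ⟨?_, h⟩))
        intro hay; exact hyJ (hay ▸ haJ)
    · rw [Finset.card_insert_of_notMem (fun h => heS (Finset.mem_of_mem_erase h)),
        Finset.card_erase_of_mem hyS, hJcard]
      omega
  have hyH : y ∈ H := Finset.mem_filter.mpr ⟨hyS, hJeq ▸ hJ⟩
  exact hyJ (hIJ (Finset.mem_insert_of_mem hyH))

/-- Transitivity of span used for the swap step: if `o` is spanned by `A ⊆ B + y` and
`y` is spanned by `B`, then `o` is spanned by `B`. -/
lemma MatroidOn.span_trans (M : MatroidOn α) {A B : Finset α} {y o : α}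
    (hA : M.Indep A) (hB : M.Indep B)
    (hAB : A ⊆ insert y B) (hyB : ¬ M.Indep (insert y B))
    (hoA : ¬ M.Indep (insert o A)) (hoB : o ∉ B) (hoy : o ≠ y) :
    ¬ M.Indep (insert o B) := by
  intro hind
  have hyB' : y ∉ B := fun h => hyB (by rwa [Finset.insert_eq_self.mpr h])
  by_cases hyA : y ∈ A
  · -- main case
    set U := insert o (insert y B) with hU
    have hAU : A ⊆ U := hAB.trans (Finset.subset_insert _ _)
    obtain ⟨D, hD, hAD, hDU, hDmax⟩ := M.exists_maximal U.card A U hA hAU (Nat.le_add_left _ _)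
    have hoD : o ∉ D := by
      intro hoD
      exact (M.dep_mono (Finset.insert_subset hoD hAD) hoA) hD
    have hDyB : D ⊆ insert y B := by
      intro a haD
      rcases Finset.mem_insert.mp (hDU haD) with h | h
      · exact absurd (h ▸ haD) hoD
      · exact h
    have hoBind : M.Indep (insert o B) := hind
    have hoBU : insert o B ⊆ U := Finset.insert_subset (Finset.mem_insert_self _ _)
      ((Finset.subset_insert _ _).trans (Finset.subset_insert _ _))
    have hcard : (insert y B).card ≤ D.card := by
      by_contra hc
      push_neg at hc
      have hoBcard : (insert o B).card = B.card + 1 := Finset.card_insert_of_notMem hoB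
      have hyBcard : (insert y B).card = B.card + 1 := Finset.card_insert_of_notMem hyB'
      obtain ⟨x, hxB, hxD, hxind⟩ := M.augment' hD hoBind (by omega)
      exact hDmax x (hoBU hxB) hxD hxind
    have : D = insert y B := Finset.eq_of_subset_of_card_le hDyB hcard
    exact hyB (this ▸ hD)
  · -- A ⊆ B
    have hAB' : A ⊆ B := fun a ha => (Finset.mem_insert.mp (hAB ha)).resolve_left
      (fun h => hyA (h ▸ ha))
    exact (M.dep_mono (Finset.insert_subset_insert _ hAB') hoA) hind

end Aux

/-- Marginal gains are antitone in the base set. -/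
lemma marg_anti {f : Finset α → ℝ} (hsub : SubmodularFn f) {X Y : Finset α} {e : α}
    (hXY : X ⊆ Y) (he : e ∉ Y) : marg f Y e ≤ marg f X e :=
  hsub X Y hXY e he

/-- A list is good if each entry's weight is at most its marginal gain over the
set of later entries. -/
def GoodW (f : Finset α → ℝ) (w : α → ℝ) : List α → Prop
  | [] => True
  | x :: l => w x ≤ marg f l.toFinset x ∧ GoodW f w l

lemma goodW_congr {f : Finset α → ℝ} {w w' : α → ℝ} :
    ∀ {l : List α}, (∀ x ∈ l, w x = w' x) → GoodW f w l → GoodW f w' l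
  | [], _, _ => trivial
  | x :: l, h, hg => ⟨(h x (List.mem_cons_self)) ▸ hg.1,
      goodW_congr (fun y hy => h y (List.mem_cons_of_mem x hy)) hg.2⟩

lemma nodup_toFinset_erase {l : List α} (hl : l.Nodup) (y : α) :
    (l.erase y).toFinset = l.toFinset.erase y := by
  ext a
  simp [List.Nodup.mem_erase_iff hl, Finset.mem_erase, and_comm]

lemma goodW_erase {f : Finset α → ℝ} {w : α → ℝ} (hsub : SubmodularFn f) (y : α) :
    ∀ {l : List α}, l.Nodup → GoodW f w l → GoodW f w (l.erase y)
  | [], _, _ => trivial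
  | x :: l, hl, hg => by
    rcases List.nodup_cons.mp hl with ⟨hxl, hl'⟩
    by_cases hxy : x = y
    · subst hxy
      rw [List.erase_cons_head]
      exact hg.2
    · rw [List.erase_cons_tail (by simp [hxy])]
      refine ⟨le_trans hg.1 (marg_anti hsub ?_ ?_), goodW_erase hsub y hl' hg.2⟩
      · intro a ha
        rw [List.mem_toFinset] at *
        exact List.mem_of_mem_erase ha
      · rw [List.mem_toFinset]
        exact hxl

lemma goodW_sum {f : Finset α → ℝ} {w : α → ℝ} (hnorm : f ∅ = 0) :
    ∀ {l : List α}, l.Nodup → GoodW f w l → ∑ x ∈ l.toFinset, w x ≤ f l.toFinset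
  | [], _, _ => by simp [hnorm]
  | x :: l, hl, hg => by
    rcases List.nodup_cons.mp hl with ⟨hxl, hl'⟩
    have hx : x ∉ l.toFinset := by rwa [List.mem_toFinset]
    rw [List.toFinset_cons, Finset.sum_insert hx]
    have h1 := goodW_sum hnorm hl' hg.2
    have h2 := hg.1
    unfold marg at h2
    linarith

/-- Submodular sum bound: `f (S' ∪ T) ≤ f S' + ∑_{o ∈ T \ S'} f(o | S')`. -/
lemma f_union_le {f : Finset α → ℝ} (hsub : SubmodularFn f) (S' : Finset α) :
    ∀ T : Finset α, f (S' ∪ T) ≤ f S' + ∑ o ∈ T \ S', marg f S' o := by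
  intro T
  induction T using Finset.induction_on with
  | empty => simp
  | @insert a T ha ih =>
    by_cases haS : a ∈ S'
    · have h1 : S' ∪ insert a T = S' ∪ T := by
        rw [Finset.union_insert, Finset.insert_eq_self.mpr (Finset.mem_union_left T haS)]
      have h2 : insert a T \ S' = T \ S' := Finset.insert_sdiff_of_mem T haS
      rw [h1, h2]; exact ih
    · have h1 : S' ∪ insert a T = insert a (S' ∪ T) := by
        rw [Finset.union_insert]
      have h2 : insert a T \ S' = insert a (T \ S') := Finset.insert_sdiff_of_notMem T haS
      have ha' : a ∉ T \ S' := fun h => ha (Finset.mem_sdiff.mp h).1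
      have ha'' : a ∉ S' ∪ T := by
        rw [Finset.mem_union]; tauto
      have h3 : marg f (S' ∪ T) a ≤ marg f S' a :=
        marg_anti hsub Finset.subset_union_left ha''
      rw [h1, h2, Finset.sum_insert ha']
      have h4 : f (insert a (S' ∪ T)) = f (S' ∪ T) + marg f (S' ∪ T) a := by
        unfold marg; ring
      linarith

/-- Exchange-based weight bound: if every element of the independent set `O` is spanned
by the elements of the independent set `S` of at least half its weight, then
`w(O) ≤ 2 w(S)`. -/
lemma weight_exchange_bound {M : MatroidOn α} (w : α → ℝ) {S O : Finset α}
    (hS : M.Indep S) (hO : M.Indep O)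
    (hwS : ∀ y ∈ S, 0 ≤ w y) (hwO : ∀ o ∈ O, 0 ≤ w o)
    (hsp : ∀ o ∈ O, ¬ M.Indep (insert o (S.filter fun y => w o ≤ 2 * w y))) :
    ∑ o ∈ O, w o ≤ 2 * ∑ y ∈ S, w y := by
  set t : {x // x ∈ O} → Finset α := fun o => S.filter fun y => w o.1 ≤ 2 * w y with ht
  have hall : ∀ s : Finset {x // x ∈ O}, s.card ≤ (s.biUnion t).card := by
    intro s
    rcases Finset.eq_empty_or_nonempty s with rfl | hne
    · simp
    obtain ⟨omin, homin, hmin⟩ := Finset.exists_min_image s (fun o => w o.1) hne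
    have hsub1 : s.card ≤ (O.filter fun x => w omin.1 ≤ w x).card := by
      rw [← Finset.card_image_of_injective s Subtype.val_injective]
      apply Finset.card_le_card
      intro a ha
      obtain ⟨b, hb, rfl⟩ := Finset.mem_image.mp ha
      exact Finset.mem_filter.mpr ⟨b.2, hmin b hb⟩
    have hsub2 : (O.filter fun x => w omin.1 ≤ w x).card ≤ (t omin).card := by
      apply M.span_card (M.subset_indep (Finset.filter_subset _ _) hS)
        (M.subset_indep (Finset.filter_subset _ _) hO)
      intro x hx
      rcases Finset.mem_filter.mp hx with ⟨hxO, hwx⟩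
      right
      apply M.dep_mono (Finset.insert_subset_insert _ _) (hsp x hxO)
      intro z hz
      rcases Finset.mem_filter.mp hz with ⟨hzS, hzw⟩
      exact Finset.mem_filter.mpr ⟨hzS, le_trans hwx hzw⟩
    have hsub3 : (t omin).card ≤ (s.biUnion t).card :=
      Finset.card_le_card (Finset.subset_biUnion_of_mem t homin)
    omega
  obtain ⟨g, hginj, hgmem⟩ := (Finset.all_card_le_biUnion_card_iff_exists_injective t).mp hall
  have hkey : ∀ o : {x // x ∈ O}, w o.1 ≤ 2 * w (g o) := by
    intro o
    exact (Finset.mem_filter.mp (hgmem o)).2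
  have hgS : ∀ o : {x // x ∈ O}, g o ∈ S := fun o =>
    Finset.filter_subset _ _ (hgmem o)
  calc ∑ o ∈ O, w o = ∑ o ∈ O.attach, w o.1 := (Finset.sum_attach O w).symm
    _ ≤ ∑ o ∈ O.attach, 2 * w (g o) := Finset.sum_le_sum (fun o _ => hkey o)
    _ = 2 * ∑ o ∈ O.attach, w (g o) := by rw [Finset.mul_sum]
    _ = 2 * ∑ y ∈ O.attach.image g, w y := by
        rw [Finset.sum_image (fun a _ b _ h => hginj h)]
    _ ≤ 2 * ∑ y ∈ S, w y := by
        apply mul_le_mul_of_nonneg_left _ (by norm_num)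
        apply Finset.sum_le_sum_of_subset_of_nonneg
        · intro a ha
          obtain ⟨b, _, rfl⟩ := Finset.mem_image.mp ha
          exact hgS b
        · intro y hy _
          exact hwS y hy

/-- The master invariant for the `Threshold-Swapping` algorithm.  `V` is the set of
elements processed so far and `θ = (ε/k)·τ` the threshold. -/
structure TSInv (f : Finset α → ℝ) (M : MatroidOn α) (θ : ℝ) (V : Finset α)
    (st : TSState α) : Prop where
  indep : M.Indep st.S
  SsubS' : st.S ⊆ st.S'
  S'subV : st.S' ⊆ V
  wnn : ∀ x ∈ st.S', 0 ≤ st.w x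
  sumS' : f st.S' = ∑ x ∈ st.S', st.w x
  killed : ∑ x ∈ st.S' \ st.S, st.w x ≤ ∑ x ∈ st.S, st.w x
  good : ∃ l : List α, l.Nodup ∧ l.toFinset = st.S ∧ GoodW f st.w l
  hist : ∀ o ∈ V, o ∈ st.S' ∨ (marg f st.S' o ≤ st.w o ∧
    (st.w o < θ ∨ (θ ≤ st.w o ∧
      ¬ M.Indep (insert o (st.S.filter fun y => st.w o ≤ 2 * st.w y)))))

lemma step_inv {f : Finset α → ℝ} {M : MatroidOn α} {ε τ : ℝ} {k : ℕ}
    (hsub : SubmodularFn f) (hθ : 0 ≤ ε / (k : ℝ) * τ)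
    {V : Finset α} {st st' : TSState α} {e : α}
    (hInv : TSInv f M (ε / (k : ℝ) * τ) V st) (he : e ∉ V)
    (hstep : TSStep f M ε τ k st e st') :
    TSInv f M (ε / (k : ℝ) * τ) (insert e V) st' := by
  set θ := ε / (k : ℝ) * τ with hθdef
  have heS' : e ∉ st.S' := fun h => he (hInv.S'subV h)
  have heS : e ∉ st.S := fun h => heS' (hInv.SsubS' h)
  have hsum_upd : ∀ (v : ℝ) (X : Finset α), e ∉ X →
      ∑ x ∈ X, Function.update st.w e v x = ∑ x ∈ X, st.w x := by
    intro v X hX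
    exact Finset.sum_congr rfl fun x hx =>
      Function.update_of_ne (ne_of_mem_of_not_mem hx hX) _ _
  have hfilter_upd : ∀ (v : ℝ) (o : α), o ≠ e →
      (st.S.filter fun y => Function.update st.w e v o ≤ 2 * Function.update st.w e v y)
        = st.S.filter fun y => st.w o ≤ 2 * st.w y := by
    intro v o ho
    apply Finset.filter_congr
    intro y hy
    rw [Function.update_of_ne ho, Function.update_of_ne (ne_of_mem_of_not_mem hy heS)]
  cases hstep with
  | ignore hfail =>
    refine ⟨hInv.indep, hInv.SsubS', hInv.S'subV.trans (Finset.subset_insert _ _),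
      ?_, ?_, ?_, ?_, ?_⟩ <;> dsimp only
    · intro x hx
      rw [Function.update_of_ne (ne_of_mem_of_not_mem hx heS')]
      exact hInv.wnn x hx
    · rw [hsum_upd _ _ heS']; exact hInv.sumS'
    · rw [hsum_upd _ _ (fun h => heS' (Finset.mem_sdiff.mp h).1), hsum_upd _ _ heS]
      exact hInv.killed
    · obtain ⟨l, h1, h2, h3⟩ := hInv.good
      refine ⟨l, h1, h2, goodW_congr (fun x hx => ?_) h3⟩
      rw [Function.update_of_ne
        (ne_of_mem_of_not_mem (h2 ▸ List.mem_toFinset.mpr hx) heS)]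
    · intro o ho
      rcases Finset.mem_insert.mp ho with rfl | hoV
      · right
        simp only [Function.update_self]
        exact ⟨le_refl _, Or.inl hfail⟩
      · have hoe : o ≠ e := fun h => he (h ▸ hoV)
        rcases hInv.hist o hoV with h | ⟨h1, h2⟩
        · exact Or.inl h
        · right
          rw [hfilter_upd _ _ hoe, Function.update_of_ne hoe]
          exact ⟨h1, h2⟩
  | add hpass hind =>
    push_neg at hpass
    refine ⟨hind, Finset.insert_subset_insert _ hInv.SsubS',
      Finset.insert_subset_insert _ hInv.S'subV, ?_, ?_, ?_, ?_, ?_⟩ <;> dsimp only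
    · intro x hx
      rcases Finset.mem_insert.mp hx with rfl | hx
      · rw [Function.update_self]; exact le_trans hθ hpass
      · rw [Function.update_of_ne (ne_of_mem_of_not_mem hx heS')]
        exact hInv.wnn x hx
    · rw [Finset.sum_insert heS', hsum_upd _ _ heS', Function.update_self]
      unfold marg
      rw [← hInv.sumS']; ring
    · have hkeq : insert e st.S' \ insert e st.S = st.S' \ st.S := by
        ext a
        simp only [Finset.mem_sdiff, Finset.mem_insert, not_or]
        constructor
        · rintro ⟨h1 | h1, h2, h3⟩
          · exact absurd h1 h2
          · exact ⟨h1, h3⟩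
        · rintro ⟨h1, h2⟩
          exact ⟨Or.inr h1, ne_of_mem_of_not_mem h1 heS', h2⟩
      rw [hkeq, Finset.sum_insert heS, hsum_upd _ _ heS,
        hsum_upd _ _ (fun h => heS' (Finset.mem_sdiff.mp h).1), Function.update_self]
      have h0 : 0 ≤ marg f st.S' e := le_trans hθ hpass
      linarith [hInv.killed]
    · obtain ⟨l, h1, h2, h3⟩ := hInv.good
      refine ⟨e :: l,
        List.nodup_cons.mpr ⟨fun h => heS (h2 ▸ List.mem_toFinset.mpr h), h1⟩,
        by rw [List.toFinset_cons, h2], ?_, ?_⟩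
      · rw [Function.update_self, h2]
        exact marg_anti hsub hInv.SsubS' heS'
      · refine goodW_congr (fun x hx => ?_) h3
        rw [Function.update_of_ne
          (ne_of_mem_of_not_mem (h2 ▸ List.mem_toFinset.mpr hx) heS)]
    · intro o ho
      rcases Finset.mem_insert.mp ho with rfl | hoV
      · exact Or.inl (Finset.mem_insert_self _ _)
      · have hoe : o ≠ e := fun h => he (h ▸ hoV)
        rcases hInv.hist o hoV with h | ⟨h1, h2⟩
        · exact Or.inl (Finset.mem_insert_of_mem h)
        · by_cases hoS' : o ∈ st.S'
          · exact Or.inl (Finset.mem_insert_of_mem hoS')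
          right
          have hoS'' : o ∉ insert e st.S' := by
            simp only [Finset.mem_insert]; tauto
          simp only [Function.update_of_ne hoe]
          refine ⟨le_trans (marg_anti hsub (Finset.subset_insert _ _) hoS'') h1, ?_⟩
          rcases h2 with h2 | ⟨h2a, h2b⟩
          · exact Or.inl h2
          right
          refine ⟨h2a, ?_⟩
          apply M.dep_mono (Finset.insert_subset_insert o ?_) h2b
          intro z hz
          rcases Finset.mem_filter.mp hz with ⟨hzS, hzw⟩
          refine Finset.mem_filter.mpr ⟨Finset.mem_insert_of_mem hzS, ?_⟩
          rw [Function.update_of_ne (ne_of_mem_of_not_mem hzS heS)]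
          exact hzw
  | swap hpass hdep hy hyind hmin hgain =>
    rename_i y
    push_neg at hpass
    have hye : y ≠ e := ne_of_mem_of_not_mem hy heS
    have hyS' : y ∈ st.S' := hInv.SsubS' hy
    have heSe : e ∉ st.S.erase y := fun h => heS (Finset.mem_of_mem_erase h)
    have hS2S' : insert e (st.S.erase y) ⊆ insert e st.S' :=
      Finset.insert_subset_insert _ ((Finset.erase_subset _ _).trans hInv.SsubS')
    have hm0 : 0 ≤ marg f st.S' e := le_trans hθ hpass
    refine ⟨hyind, hS2S', Finset.insert_subset_insert _ hInv.S'subV,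
      ?_, ?_, ?_, ?_, ?_⟩ <;> dsimp only
    · intro x hx
      rcases Finset.mem_insert.mp hx with rfl | hx
      · rw [Function.update_self]; exact hm0
      · rw [Function.update_of_ne (ne_of_mem_of_not_mem hx heS')]
        exact hInv.wnn x hx
    · rw [Finset.sum_insert heS', hsum_upd _ _ heS', Function.update_self]
      unfold marg
      rw [← hInv.sumS']; ring
    · have hkeq : insert e st.S' \ insert e (st.S.erase y) = insert y (st.S' \ st.S) := by
        ext a
        simp only [Finset.mem_sdiff, Finset.mem_insert, Finset.mem_erase, not_or, not_and]
        constructor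
        · rintro ⟨h1 | h1, h2, h3⟩
          · exact absurd h1 h2
          · by_cases hay : a = y
            · exact Or.inl hay
            · exact Or.inr ⟨h1, fun h => (h3 hay h).elim⟩
        · rintro (rfl | ⟨h1, h2⟩)
          · exact ⟨Or.inr hyS', hye, fun h _ => (h rfl).elim⟩
          · exact ⟨Or.inr h1, ne_of_mem_of_not_mem h1 heS', fun _ h => h2 h⟩
      have hynk : y ∉ st.S' \ st.S := fun h => (Finset.mem_sdiff.mp h).2 hy
      rw [hkeq, Finset.sum_insert hynk, Finset.sum_insert heSe,
        hsum_upd _ _ (fun h => heS' (Finset.mem_sdiff.mp h).1), hsum_upd _ _ heSe,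
        Function.update_self, Function.update_of_ne hye]
      have hsplit := Finset.sum_erase_add st.S st.w hy
      linarith [hInv.killed, hgain]
    · obtain ⟨l, h1, h2, h3⟩ := hInv.good
      have hel : e ∉ l.erase y := fun h =>
        heS (h2 ▸ List.mem_toFinset.mpr (List.mem_of_mem_erase h))
      refine ⟨e :: l.erase y, List.nodup_cons.mpr ⟨hel, h1.erase y⟩, ?_, ?_, ?_⟩
      · rw [List.toFinset_cons, nodup_toFinset_erase h1, h2]
      · rw [Function.update_self, nodup_toFinset_erase h1, h2]
        exact marg_anti hsub ((Finset.erase_subset _ _).trans hInv.SsubS') heS'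
      · refine goodW_congr (fun x hx => ?_) (goodW_erase hsub y h1 h3)
        rw [Function.update_of_ne (ne_of_mem_of_not_mem
          (h2 ▸ List.mem_toFinset.mpr (List.mem_of_mem_erase hx)) heS)]
    · intro o ho
      rcases Finset.mem_insert.mp ho with rfl | hoV
      · exact Or.inl (Finset.mem_insert_self _ _)
      have hoe : o ≠ e := fun h => he (h ▸ hoV)
      rcases hInv.hist o hoV with h | ⟨h1, h2⟩
      · exact Or.inl (Finset.mem_insert_of_mem h)
      by_cases hoS' : o ∈ st.S'
      · exact Or.inl (Finset.mem_insert_of_mem hoS')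
      right
      have hoS'' : o ∉ insert e st.S' := by
        simp only [Finset.mem_insert]; tauto
      simp only [Function.update_of_ne hoe]
      refine ⟨le_trans (marg_anti hsub (Finset.subset_insert _ _) hoS'') h1, ?_⟩
      rcases h2 with h2 | ⟨h2a, h2b⟩
      · exact Or.inl h2
      right
      refine ⟨h2a, ?_⟩
      -- span argument
      have hoS : o ∉ st.S := fun h => hoS' (hInv.SsubS' h)
      have hoy : o ≠ y := fun h => hoS (h ▸ hy)
      set w' := Function.update st.w e (marg f st.S' e) with hw'
      set S₂ := insert e (st.S.erase y) with hS₂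
      set Hnew := S₂.filter (fun z => st.w o ≤ 2 * w' z) with hHnew
      have hHnewS₂ : Hnew ⊆ S₂ := Finset.filter_subset _ _
      have hHnewI : M.Indep Hnew := M.subset_indep hHnewS₂ hyind
      have hHoldI : M.Indep (st.S.filter fun y' => st.w o ≤ 2 * st.w y') :=
        M.subset_indep (Finset.filter_subset _ _) hInv.indep
      have hoHnew : o ∉ Hnew := by
        intro h
        rcases Finset.mem_insert.mp (hHnewS₂ h) with h' | h'
        · exact hoe h'
        · exact hoS (Finset.mem_of_mem_erase h')
      by_cases hcy : st.w o ≤ 2 * st.w y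
      · -- transitivity through y
        have hdep2 : ¬ M.Indep (insert y S₂) := by
          have hins : insert y S₂ = insert e st.S := by
            rw [hS₂]
            ext a
            simp only [Finset.mem_insert, Finset.mem_erase]
            constructor
            · rintro (rfl | rfl | ⟨_, h'⟩)
              · exact Or.inr hy
              · exact Or.inl rfl
              · exact Or.inr h'
            · rintro (rfl | h')
              · exact Or.inr (Or.inl rfl)
              · by_cases hay : a = y
                · exact Or.inl hay
                · exact Or.inr (Or.inr ⟨hay, h'⟩)
          rw [hins]; exact hdep
        have h1' := M.swap_filter_dep hyind hdep2
        have hsubH : (S₂.filter fun z => M.Indep (insert y (S₂.erase z))) ⊆ Hnew := by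
          intro z hz
          rcases Finset.mem_filter.mp hz with ⟨hzS₂, hzind⟩
          refine Finset.mem_filter.mpr ⟨hzS₂, ?_⟩
          by_cases hze : z = e
          · subst hze
            rw [hw', Function.update_self]
            linarith [hgain, hm0]
          · have hzSe : z ∈ st.S.erase y := by
              rcases Finset.mem_insert.mp hzS₂ with h' | h'
              · exact absurd h' hze
              · exact h'
            have hzS : z ∈ st.S := Finset.mem_of_mem_erase hzSe
            have hzy : z ≠ y := (Finset.mem_erase.mp hzSe).1
            have hset : insert y (S₂.erase z) = insert e (st.S.erase z) := by
              rw [hS₂]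
              ext a
              simp only [Finset.mem_insert, Finset.mem_erase]
              constructor
              · rintro (rfl | ⟨haz, rfl | ⟨hay, haS⟩⟩)
                · exact Or.inr ⟨Ne.symm hzy, hy⟩
                · exact Or.inl rfl
                · exact Or.inr ⟨haz, haS⟩
              · rintro (rfl | ⟨haz, haS⟩)
                · exact Or.inr ⟨Ne.symm hze, Or.inl rfl⟩
                · by_cases hay : a = y
                  · exact Or.inl hay
                  · exact Or.inr ⟨haz, Or.inr ⟨hay, haS⟩⟩
            rw [hset] at hzind
            have := hmin z hzS hzind
            rw [hw', Function.update_of_ne (ne_of_mem_of_not_mem hzS heS)]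
            linarith
        have h3' : ¬ M.Indep (insert y Hnew) :=
          M.dep_mono (Finset.insert_subset_insert _ hsubH) h1'
        have h4' : (st.S.filter fun y' => st.w o ≤ 2 * st.w y') ⊆ insert y Hnew := by
          intro z hz
          rcases Finset.mem_filter.mp hz with ⟨hzS, hzw⟩
          by_cases hzy : z = y
          · exact hzy ▸ Finset.mem_insert_self _ _
          refine Finset.mem_insert_of_mem (Finset.mem_filter.mpr ⟨?_, ?_⟩)
          · exact Finset.mem_insert_of_mem (Finset.mem_erase.mpr ⟨hzy, hzS⟩)
          · rw [hw', Function.update_of_ne (ne_of_mem_of_not_mem hzS heS)]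
            exact hzw
        exact M.span_trans hHoldI hHnewI h4' h3' h2b hoHnew hoy
      · -- y is not in the old high set
        have hsubH : (st.S.filter fun y' => st.w o ≤ 2 * st.w y') ⊆ Hnew := by
          intro z hz
          rcases Finset.mem_filter.mp hz with ⟨hzS, hzw⟩
          have hzy : z ≠ y := fun h => hcy (h ▸ hzw)
          refine Finset.mem_filter.mpr ⟨?_, ?_⟩
          · exact Finset.mem_insert_of_mem (Finset.mem_erase.mpr ⟨hzy, hzS⟩)
          · rw [hw', Function.update_of_ne (ne_of_mem_of_not_mem hzS heS)]
            exact hzw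
        exact M.dep_mono (Finset.insert_subset_insert _ hsubH) h2b
  | discardLow hpass hdep hy hyind hmin hgain =>
    rename_i y
    push_neg at hpass hgain
    refine ⟨hInv.indep, hInv.SsubS', hInv.S'subV.trans (Finset.subset_insert _ _),
      ?_, ?_, ?_, ?_, ?_⟩ <;> dsimp only
    · intro x hx
      rw [Function.update_of_ne (ne_of_mem_of_not_mem hx heS')]
      exact hInv.wnn x hx
    · rw [hsum_upd _ _ heS']; exact hInv.sumS'
    · rw [hsum_upd _ _ (fun h => heS' (Finset.mem_sdiff.mp h).1), hsum_upd _ _ heS]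
      exact hInv.killed
    · obtain ⟨l, h1, h2, h3⟩ := hInv.good
      refine ⟨l, h1, h2, goodW_congr (fun x hx => ?_) h3⟩
      rw [Function.update_of_ne
        (ne_of_mem_of_not_mem (h2 ▸ List.mem_toFinset.mpr hx) heS)]
    · intro o ho
      rcases Finset.mem_insert.mp ho with rfl | hoV
      · right
        simp only [Function.update_self]
        refine ⟨le_refl _, Or.inr ⟨hpass, ?_⟩⟩
        apply M.dep_mono (Finset.insert_subset_insert o ?_)
          (M.swap_filter_dep hInv.indep hdep)
        intro z hz
        rcases Finset.mem_filter.mp hz with ⟨hzS, hzind⟩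
        refine Finset.mem_filter.mpr ⟨hzS, ?_⟩
        rw [Function.update_of_ne (ne_of_mem_of_not_mem hzS heS)]
        linarith [hmin z hzS hzind, hgain]
      · have hoe : o ≠ e := fun h => he (h ▸ hoV)
        rcases hInv.hist o hoV with h | ⟨h1, h2⟩
        · exact Or.inl h
        · right
          rw [hfilter_upd _ _ hoe, Function.update_of_ne hoe]
          exact ⟨h1, h2⟩
  | discardNone hpass hdep h =>
    push_neg at hpass
    refine ⟨hInv.indep, hInv.SsubS', hInv.S'subV.trans (Finset.subset_insert _ _),
      ?_, ?_, ?_, ?_, ?_⟩ <;> dsimp only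
    · intro x hx
      rw [Function.update_of_ne (ne_of_mem_of_not_mem hx heS')]
      exact hInv.wnn x hx
    · rw [hsum_upd _ _ heS']; exact hInv.sumS'
    · rw [hsum_upd _ _ (fun h => heS' (Finset.mem_sdiff.mp h).1), hsum_upd _ _ heS]
      exact hInv.killed
    · obtain ⟨l, h1, h2, h3⟩ := hInv.good
      refine ⟨l, h1, h2, goodW_congr (fun x hx => ?_) h3⟩
      rw [Function.update_of_ne
        (ne_of_mem_of_not_mem (h2 ▸ List.mem_toFinset.mpr hx) heS)]
    · intro o ho
      rcases Finset.mem_insert.mp ho with rfl | hoV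
      · right
        simp only [Function.update_self]
        refine ⟨le_refl _, Or.inr ⟨hpass, ?_⟩⟩
        apply M.dep_mono (Finset.insert_subset_insert o ?_)
          (M.swap_filter_dep hInv.indep hdep)
        intro z hz
        rcases Finset.mem_filter.mp hz with ⟨hzS, hzind⟩
        exact absurd hzind (h z hzS)
      · have hoe : o ≠ e := fun h' => he (h' ▸ hoV)
        rcases hInv.hist o hoV with h' | ⟨h1, h2⟩
        · exact Or.inl h'
        · right
          rw [hfilter_upd _ _ hoe, Function.update_of_ne hoe]
          exact ⟨h1, h2⟩

lemma run_inv {f : Finset α → ℝ} {M : MatroidOn α} {ε τ : ℝ} {k : ℕ}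
    (hsub : SubmodularFn f) (hθ : 0 ≤ ε / (k : ℝ) * τ)
    {st₀ : TSState α} {L : List α} {st₁ : TSState α}
    (hrun : TSRunFrom f M ε τ k st₀ L st₁) :
    ∀ V : Finset α, TSInv f M (ε / (k : ℝ) * τ) V st₀ →
      (∀ x ∈ L, x ∉ V) → L.Nodup →
      TSInv f M (ε / (k : ℝ) * τ) (V ∪ L.toFinset) st₁ := by
  induction hrun with
  | nil st =>
    intro V hInv _ _
    simpa using hInv
  | @cons st stm st₂ e π hstep hrest ih =>
    intro V hInv hfresh hnd
    rcases List.nodup_cons.mp hnd with ⟨heπ, hnd'⟩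
    have h1 := step_inv hsub hθ hInv (hfresh e (List.mem_cons_self)) hstep
    have h2 := ih (insert e V) h1 (fun x hx => by
      intro hm
      rcases Finset.mem_insert.mp hm with rfl | hm
      · exact heπ hx
      · exact hfresh x (List.mem_cons_of_mem e hx) hm) hnd'
    have heq : insert e V ∪ π.toFinset = V ∪ (e :: π).toFinset := by
      ext a
      simp only [Finset.mem_union, Finset.mem_insert, List.toFinset_cons, List.mem_toFinset]
      tauto
    rwa [heq] at h2

theorem threshold_swapping_approximation
    (f : Finset α → ℝ) (M : MatroidOn α)
    (hmono : MonotoneFn f) (hnorm : f ∅ = 0) (hsub : SubmodularFn f)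
    (k : ℕ) (hk : 1 ≤ k) (hrank : M.HasRank k)
    (ε τ : ℝ) (hε : 0 < ε)
    (π : List α) (hdist : π.Nodup)
    (OPT : Finset α) (hOPTmem : ∀ x ∈ OPT, x ∈ π) (hOPTind : M.Indep OPT)
    (hOPTmax : ∀ T : Finset α, (∀ x ∈ T, x ∈ π) → M.Indep T → f T ≤ f OPT)
    (hτ0 : 0 ≤ τ) (hττ : τ ≤ f OPT)
    (st : TSState α) (hrun : TSRun f M ε τ k π st) :
    f OPT ≤ 4 * f st.S + ε * f OPT := by
  have hk0 : (0 : ℝ) < (k : ℝ) := by exact_mod_cast Nat.pos_of_ne_zero (by omega)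
  set θ := ε / (k : ℝ) * τ with hθdef
  have hθ0 : 0 ≤ θ := mul_nonneg (div_nonneg hε.le hk0.le) hτ0
  have hstart : TSInv f M θ ∅ (TSState.start α) := by
    refine ⟨M.indep_empty, ?_, ?_, ?_, ?_, ?_, ⟨[], List.nodup_nil, rfl, trivial⟩, ?_⟩ <;>
      simp [TSState.start, hnorm]
  have hInv : TSInv f M θ π.toFinset st := by
    have h := run_inv hsub hθ0 hrun ∅ hstart (fun x _ h => absurd h (Finset.notMem_empty x))
      hdist
    rwa [Finset.empty_union] at h
  set W := ∑ y ∈ st.S, st.w y with hW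
  have hWfS : W ≤ f st.S := by
    obtain ⟨l, h1, h2, h3⟩ := hInv.good
    have := goodW_sum hnorm h1 h3
    rwa [h2] at this
  have hsplit : ∑ x ∈ st.S', st.w x = ∑ x ∈ st.S' \ st.S, st.w x + ∑ x ∈ st.S, st.w x :=
    (Finset.sum_sdiff hInv.SsubS').symm
  have hfS' : f st.S' ≤ 2 * W := by
    rw [hInv.sumS', hsplit]
    have := hInv.killed
    rw [hW]; linarith
  have hmono1 : f OPT ≤ f (st.S' ∪ OPT) := hmono _ _ Finset.subset_union_right
  have hUB := f_union_le hsub st.S' OPT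
  set D := OPT \ st.S' with hD
  have hhist : ∀ o ∈ D, marg f st.S' o ≤ st.w o ∧ (st.w o < θ ∨ (θ ≤ st.w o ∧
      ¬ M.Indep (insert o (st.S.filter fun y => st.w o ≤ 2 * st.w y)))) := by
    intro o ho
    rcases Finset.mem_sdiff.mp ho with ⟨hoO, hoS'⟩
    rcases hInv.hist o (List.mem_toFinset.mpr (hOPTmem o hoO)) with h | h
    · exact absurd h hoS'
    · exact h
  have hsum_split := Finset.sum_filter_add_sum_filter_not D (fun o => st.w o < θ)
    (fun o => marg f st.S' o)
  set L := D.filter (fun o => st.w o < θ) with hL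
  set H := D.filter (fun o => ¬ st.w o < θ) with hH
  have hLbound : ∑ o ∈ L, marg f st.S' o ≤ (k : ℝ) * θ := by
    have h1 : ∑ o ∈ L, marg f st.S' o ≤ ∑ o ∈ L, st.w o :=
      Finset.sum_le_sum fun o ho => (hhist o (Finset.filter_subset _ _ ho)).1
    have h2 : ∑ o ∈ L, st.w o ≤ L.card • θ :=
      Finset.sum_le_card_nsmul _ _ _ (fun o ho => le_of_lt (Finset.mem_filter.mp ho).2)
    have h3 : (L.card : ℝ) ≤ (k : ℝ) := by
      have : L.card ≤ k := le_trans (Finset.card_le_card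
        ((Finset.filter_subset _ _).trans Finset.sdiff_subset)) (hrank.2 OPT hOPTind)
      exact_mod_cast this
    have h4 : (L.card : ℝ) * θ ≤ (k : ℝ) * θ := mul_le_mul_of_nonneg_right h3 hθ0
    rw [nsmul_eq_mul] at h2
    linarith
  have hkθ : (k : ℝ) * θ = ε * τ := by
    rw [hθdef]; field_simp
  have hτε : (k : ℝ) * θ ≤ ε * f OPT := by
    rw [hkθ]
    exact mul_le_mul_of_nonneg_left hττ hε.le
  have hHbound : ∑ o ∈ H, marg f st.S' o ≤ 2 * W := by
    have h1 : ∑ o ∈ H, marg f st.S' o ≤ ∑ o ∈ H, st.w o :=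
      Finset.sum_le_sum fun o ho => (hhist o (Finset.filter_subset _ _ ho)).1
    have h2 : ∑ o ∈ H, st.w o ≤ 2 * W := by
      rw [hW]
      apply weight_exchange_bound st.w hInv.indep
        (M.subset_indep ((Finset.filter_subset _ _).trans Finset.sdiff_subset) hOPTind)
        (fun y hy => hInv.wnn y (hInv.SsubS' hy))
      · intro o ho
        have hnl := (Finset.mem_filter.mp ho).2
        have := ((hhist o (Finset.filter_subset _ _ ho)).2.resolve_left hnl).1
        linarith
      · intro o ho
        have hnl := (Finset.mem_filter.mp ho).2
        exact ((hhist o (Finset.filter_subset _ _ ho)).2.resolve_left hnl).2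
    linarith
  linarith [hWfS, hfS', hmono1, hUB, hsum_split, hLbound, hHbound, hτε]
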